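/- arXiv:0803.0336 — 2 statements merged into one kernel-verified Lean document; each statement's English description precedes it below -/
import Mathlib

section
/- Let ∂ : H₀ → H₁ and ∂ : H₁ → H₂ be closed densely defined operators between Hilbert spaces composing to zero, and let □ = ∂∂* + ∂*∂ be the associated (Gaffney) Laplacian on H₁, which is self-adjoint. If □ has closed range in H₁, then both ∂ : H₀ → H₁ and ∂* (adjoint of ∂ : H₁ → H₂) have closed range. -/
open scoped LinearPMap ComplexInnerProductSpace

/-! Since `d1 ∘ d0 = 0`, the ranges of `d0` and `d1†` are orthogonal. Since `B` is self-adjoint,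
`(range B)ᗮ = ker B`, and `⟪B w, w⟫ = ‖d1 w‖² + ‖d0† w‖²` shows `ker B = ker d1 ∩ ker d0†`, which
is orthogonal to both ranges. So the closed subspace `range B = (range B)ᗮᗮ` contains
`range d0 ⊕ range d1†`, and by the formula for `B` it is contained in it. Each summand of a closed
orthogonal sum is closed, being the intersection of the sum with the orthogonal complement of the
other summand. -/

namespace Submodule

variable {𝕜 E : Type*} [RCLike 𝕜] [NormedAddCommGroup E] [InnerProductSpace 𝕜 E]

theorem IsOrtho.isClosed_of_isClosed_sup {U V : Submodule 𝕜 E} (hUV : U ⟂ V)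
    (h : IsClosed ((U ⊔ V : Submodule 𝕜 E) : Set E)) : IsClosed (U : Set E) := by
  have hU : U = (U ⊔ V) ⊓ Vᗮ := by
    refine le_antisymm (le_inf le_sup_left hUV) fun x ⟨hx, hxV⟩ => ?_
    obtain ⟨u, hu, v, hv, rfl⟩ := mem_sup.1 hx
    have hvV : v ∈ Vᗮ := by simpa using sub_mem hxV (hUV hu)
    rw [disjoint_def.1 (isOrtho_orthogonal_left V).disjoint v hvV hv, add_zero]
    exact hu
  rw [hU, coe_inf]
  exact h.inter V.isClosed_orthogonal

end Submodule

namespace LinearPMap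

variable {𝕜 E F : Type*} [RCLike 𝕜] [NormedAddCommGroup E] [InnerProductSpace 𝕜 E]
  [NormedAddCommGroup F] [InnerProductSpace 𝕜 F]

theorem IsFormalAdjoint.mem_orthogonal_range {T : E →ₗ.[𝕜] F} {S : F →ₗ.[𝕜] E}
    (h : T.IsFormalAdjoint S) (y : S.domain) (hy : S y = 0) :
    (y : F) ∈ (LinearMap.range T.toFun)ᗮ := by
  rintro _ ⟨x, rfl⟩
  exact (h x y).trans (by rw [hy, inner_zero_right])

theorem IsFormalAdjoint.apply_eq_zero_of_add_eq_zero {G : Type*} [NormedAddCommGroup G]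
    [InnerProductSpace 𝕜 G] {S : E →ₗ.[𝕜] F} {S' : F →ₗ.[𝕜] E} {T : E →ₗ.[𝕜] G}
    {T' : G →ₗ.[𝕜] E} (hS : S'.IsFormalAdjoint S) (hT : T'.IsFormalAdjoint T)
    (u : E) (hS₁ : u ∈ S.domain) (hT₁ : u ∈ T.domain) (hS₂ : S ⟨u, hS₁⟩ ∈ S'.domain)
    (hT₂ : T ⟨u, hT₁⟩ ∈ T'.domain) (h : S' ⟨_, hS₂⟩ + T' ⟨_, hT₂⟩ = 0) :
    S ⟨u, hS₁⟩ = 0 ∧ T ⟨u, hT₁⟩ = 0 := by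
  have hnorm : ‖S ⟨u, hS₁⟩‖ ^ 2 + ‖T ⟨u, hT₁⟩‖ ^ 2 = 0 := by
    have h0 : inner 𝕜 (S' ⟨_, hS₂⟩ + T' ⟨_, hT₂⟩) u = 0 := by rw [h, inner_zero_left]
    rw [inner_add_left, hS ⟨_, hS₂⟩ ⟨u, hS₁⟩, hT ⟨_, hT₂⟩ ⟨u, hT₁⟩,
      inner_self_eq_norm_sq_to_K, inner_self_eq_norm_sq_to_K] at h0
    exact_mod_cast h0
  rw [add_eq_zero_iff_of_nonneg (sq_nonneg _) (sq_nonneg _)] at hnorm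
  simpa using hnorm

variable [CompleteSpace E]

theorem exists_adjoint_apply_eq_zero_of_mem_orthogonal_range {T : E →ₗ.[𝕜] F} {w : F}
    (hw : w ∈ (LinearMap.range T.toFun)ᗮ) : ∃ h : w ∈ T†.domain, T† ⟨w, h⟩ = 0 := by
  have hTw : ∀ x : T.domain, inner 𝕜 w (T x) = 0 := fun x =>
    inner_eq_zero_symm.1 (hw _ ⟨x, rfl⟩)
  have hdom : w ∈ T†.domain :=
    mem_adjoint_domain_of_exists w ⟨0, fun x => by rw [inner_zero_left, hTw]⟩
  refine ⟨hdom, ?_⟩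
  by_cases hT : Dense (T.domain : Set E)
  · exact adjoint_apply_eq hT _ fun x => by rw [inner_zero_left, hTw]
  · exact adjoint_apply_of_not_dense hT _

theorem _root_.IsSelfAdjoint.exists_apply_eq_zero_of_mem_orthogonal_range {A : E →ₗ.[𝕜] E}
    (hA : IsSelfAdjoint A) {w : E} (hw : w ∈ (LinearMap.range A.toFun)ᗮ) :
    ∃ h : w ∈ A.domain, A ⟨w, h⟩ = 0 := by
  obtain ⟨h, hw⟩ := exists_adjoint_apply_eq_zero_of_mem_orthogonal_range hw
  exact ⟨hA.le.1 h, (hA.le.2 rfl).symm.trans hw⟩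

end LinearPMap

theorem closed_ranges_of_laplacian_closed_range_general
    {H₀ H₁ H₂ : Type*}
    [NormedAddCommGroup H₀] [InnerProductSpace ℂ H₀] [CompleteSpace H₀]
    [NormedAddCommGroup H₁] [InnerProductSpace ℂ H₁] [CompleteSpace H₁]
    [NormedAddCommGroup H₂] [InnerProductSpace ℂ H₂]
    (d0 : H₀ →ₗ.[ℂ] H₁) (d1 : H₁ →ₗ.[ℂ] H₂)
    (h0dense : Dense (d0.domain : Set H₀)) (h1dense : Dense (d1.domain : Set H₁))
    (hcomplex : ∀ x : d0.domain, ∃ h : d0 x ∈ d1.domain, d1 ⟨d0 x, h⟩ = 0)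
    (B : H₁ →ₗ.[ℂ] H₁)
    (hBdom : ∀ u : H₁, u ∈ B.domain ↔
      ∃ (h1 : u ∈ d1.domain) (h2 : u ∈ (d0†).domain),
        d1 ⟨u, h1⟩ ∈ (d1†).domain ∧ d0† ⟨u, h2⟩ ∈ d0.domain)
    (hBval : ∀ (u : B.domain) (h1 : (u : H₁) ∈ d1.domain)
      (h2 : (u : H₁) ∈ (d0†).domain)
      (h3 : d1 ⟨(u : H₁), h1⟩ ∈ (d1†).domain)
      (h4 : d0† ⟨(u : H₁), h2⟩ ∈ d0.domain),
      B u = d1† ⟨d1 ⟨(u : H₁), h1⟩, h3⟩ + d0 ⟨d0† ⟨(u : H₁), h2⟩, h4⟩)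
    (hBsa : B† = B)
    (hBrange : IsClosed ((LinearMap.range B.toFun : Submodule ℂ H₁) : Set H₁)) :
    IsClosed ((LinearMap.range d0.toFun : Submodule ℂ H₁) : Set H₁) ∧
    IsClosed ((LinearMap.range (d1†).toFun : Submodule ℂ H₁) : Set H₁) := by
  set R₀ : Submodule ℂ H₁ := LinearMap.range d0.toFun
  set R₁ : Submodule ℂ H₁ := LinearMap.range (d1†).toFun
  set R : Submodule ℂ H₁ := LinearMap.range B.toFun
  have hd0 : d0.IsFormalAdjoint (d0†) := (LinearPMap.adjoint_isFormalAdjoint h0dense).symm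
  have hd1 : (d1†).IsFormalAdjoint d1 := LinearPMap.adjoint_isFormalAdjoint h1dense
  have hR₀R₁ : R₀ ⟂ R₁ := by
    rintro _ ⟨x, rfl⟩
    obtain ⟨hx, hd1x⟩ := hcomplex x
    exact hd1.mem_orthogonal_range ⟨_, hx⟩ hd1x
  have hRperp : Rᗮ ⟂ R₀ ⊔ R₁ := by
    intro w hw
    obtain ⟨hwB, hBw⟩ := IsSelfAdjoint.exists_apply_eq_zero_of_mem_orthogonal_range hBsa hw
    obtain ⟨h₁, h₂, h₃, h₄⟩ := (hBdom w).1 hwB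
    obtain ⟨hd1w, hd0w⟩ := hd1.apply_eq_zero_of_add_eq_zero hd0 w h₁ h₂ h₃ h₄
      ((hBval ⟨w, hwB⟩ h₁ h₂ h₃ h₄).symm.trans hBw)
    rw [← Submodule.inf_orthogonal]
    exact ⟨hd0.mem_orthogonal_range ⟨w, h₂⟩ hd0w, hd1.mem_orthogonal_range ⟨w, h₁⟩ hd1w⟩
  have hR₀₁ : R₀ ⊔ R₁ ≤ R := hRperp.symm.le.trans_eq <| by
    rw [Submodule.orthogonal_orthogonal_eq_closure, hBrange.submodule_topologicalClosure_eq]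
  have hRle : R ≤ R₀ ⊔ R₁ := by
    rintro _ ⟨u, rfl⟩
    obtain ⟨h₁, h₂, h₃, h₄⟩ := (hBdom u).1 u.2
    change B u ∈ _
    rw [hBval u h₁ h₂ h₃ h₄, add_comm]
    exact Submodule.add_mem_sup ⟨_, rfl⟩ ⟨_, rfl⟩
  have hsup : IsClosed ((R₀ ⊔ R₁ : Submodule ℂ H₁) : Set H₁) := le_antisymm hR₀₁ hRle ▸ hBrange
  exact ⟨hR₀R₁.isClosed_of_isClosed_sup hsup,
    hR₀R₁.symm.isClosed_of_isClosed_sup (sup_comm R₀ R₁ ▸ hsup)⟩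

/-- If the (Gaffney) Laplacian `□ = ∂∂* + ∂*∂` of a Hilbert complex
`H₀ →∂₀ H₁ →∂₁ H₂` is self-adjoint and has closed range in `H₁`, then both
`∂₀ : H₀ → H₁` and `∂₁*` (the adjoint of `∂₁ : H₁ → H₂`) have closed range. -/
theorem closed_ranges_of_laplacian_closed_range
    {H₀ H₁ H₂ : Type*}
    [NormedAddCommGroup H₀] [InnerProductSpace ℂ H₀] [CompleteSpace H₀]
    [NormedAddCommGroup H₁] [InnerProductSpace ℂ H₁] [CompleteSpace H₁]
    [NormedAddCommGroup H₂] [InnerProductSpace ℂ H₂] [CompleteSpace H₂]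
    (d0 : H₀ →ₗ.[ℂ] H₁) (d1 : H₁ →ₗ.[ℂ] H₂)
    (h0dense : Dense (d0.domain : Set H₀)) (h1dense : Dense (d1.domain : Set H₁))
    (h0closed : d0.IsClosed) (h1closed : d1.IsClosed)
    (hcomplex : ∀ x : d0.domain, ∃ h : d0 x ∈ d1.domain, d1 ⟨d0 x, h⟩ = 0)
    (B : H₁ →ₗ.[ℂ] H₁)
    (hBdom : ∀ u : H₁, u ∈ B.domain ↔
      ∃ (h1 : u ∈ d1.domain) (h2 : u ∈ (d0†).domain),
        d1 ⟨u, h1⟩ ∈ (d1†).domain ∧ d0† ⟨u, h2⟩ ∈ d0.domain)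
    (hBval : ∀ (u : B.domain) (h1 : (u : H₁) ∈ d1.domain)
      (h2 : (u : H₁) ∈ (d0†).domain)
      (h3 : d1 ⟨(u : H₁), h1⟩ ∈ (d1†).domain)
      (h4 : d0† ⟨(u : H₁), h2⟩ ∈ d0.domain),
      B u = d1† ⟨d1 ⟨(u : H₁), h1⟩, h3⟩ + d0 ⟨d0† ⟨(u : H₁), h2⟩, h4⟩)
    (hBsa : B† = B)
    (hBrange : IsClosed ((LinearMap.range B.toFun : Submodule ℂ H₁) : Set H₁)) :
    IsClosed ((LinearMap.range d0.toFun : Submodule ℂ H₁) : Set H₁) ∧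
    IsClosed ((LinearMap.range (d1†).toFun : Submodule ℂ H₁) : Set H₁) :=
  closed_ranges_of_laplacian_closed_range_general d0 d1 h0dense h1dense hcomplex B hBdom hBval hBsa
    hBrange
end

section
/- Conversely, in a Hilbert complex, if ∂ has closed range in both H₁ and H₂ (i.e. range(∂ : H₀→H₁) and range(∂ : H₁→H₂) are closed), then the Laplacian □ = ∂∂* + ∂*∂ on H₁ has closed range; specifically one has the estimate ‖u‖² ≤ C⟨□u, u⟩ for all u ∈ dom(□) orthogonal to ker(□). -/
/-!
Write `ℋ = ker ∂₁ ∩ (range ∂₀)ᗮ ⊆ ker □`. A vector `u ∈ dom □` orthogonal to `ℋ` splits as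
`u = p + q` with `p ∈ range ∂₀` and `q ∈ (ker ∂₁)ᗮ`. Since `∂₀` and `∂₁` are closed with closed
range, the open mapping theorem gives `‖q‖ ≤ c₁ ‖∂₁ u‖` and `‖p‖ ≤ c₀ ‖∂₀* u‖`, hence
`‖u‖² ≤ C (‖∂₁ u‖² + ‖∂₀* u‖²) = C ⟨□u, u⟩`. So `□` is bounded below on `(ker □)ᗮ`, and a closed
operator that is bounded below off its kernel has closed range.
-/

open scoped LinearPMap InnerProductSpace ComplexInnerProductSpace

namespace Submodule

variable {𝕜 E : Type*} [RCLike 𝕜] [NormedAddCommGroup E] [InnerProductSpace 𝕜 E]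

theorem norm_le_of_mem_orthogonal_of_sub_mem {K : Submodule 𝕜 E} {x y : E} (hx : x ∈ Kᗮ)
    (hyx : y - x ∈ K) : ‖x‖ ≤ ‖y‖ := by
  have hpyth : ‖y‖ * ‖y‖ = ‖x‖ * ‖x‖ + ‖y - x‖ * ‖y - x‖ := by
    simpa using norm_add_sq_eq_norm_sq_add_norm_sq_of_inner_eq_zero x (y - x)
      ((K.mem_orthogonal' x).1 hx _ hyx)
  exact (mul_self_le_mul_self_iff (norm_nonneg _) (norm_nonneg _)).2
    (hpyth ▸ le_add_of_nonneg_right (mul_self_nonneg _))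

theorem starProjection_mem_of_mem_orthogonal_inf {K R : Submodule 𝕜 E}
    [K.HasOrthogonalProjection] [R.HasOrthogonalProjection] (hRK : R ≤ K) {u : E}
    (hu : u ∈ (K ⊓ Rᗮ)ᗮ) : K.starProjection u ∈ R := by
  set p := K.starProjection u
  set h := p - R.starProjection p
  have hh : h ∈ K ⊓ Rᗮ :=
    ⟨K.sub_mem (K.starProjection_apply_mem u) (hRK (R.starProjection_apply_mem p)),
      R.sub_starProjection_mem_orthogonal p⟩
  have h_zero : h = 0 := by
    rw [← inner_self_eq_zero (𝕜 := 𝕜)]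
    calc ⟪h, h⟫_𝕜 = ⟪u, h⟫_𝕜 - ⟪u - p, h⟫_𝕜 - ⟪R.starProjection p, h⟫_𝕜 := by
          simp only [h, inner_sub_left]; ring
      _ = 0 := by
        rw [(mem_orthogonal' _ u).1 hu h hh,
          (mem_orthogonal' _ _).1 (K.sub_starProjection_mem_orthogonal u) h hh.1,
          (mem_orthogonal _ _).1 hh.2 _ (R.starProjection_apply_mem p), sub_zero, sub_self]
  exact R.starProjection_eq_self_iff.1 (sub_eq_zero.1 h_zero).symm

end Submodule

theorem le_of_sq_le_mul {a b : ℝ} (hb : 0 ≤ b) (h : a ^ 2 ≤ b * a) : a ≤ b := by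
  nlinarith

namespace LinearPMap

section Ker

variable {R E F : Type*} [Ring R] [AddCommGroup E] [Module R E] [AddCommGroup F] [Module R F]

def ker (f : E →ₗ.[R] F) : Submodule R E :=
  f.graph.comap (LinearMap.inl R E F)

theorem mem_ker {f : E →ₗ.[R] F} {x : E} : x ∈ f.ker ↔ ∃ y : f.domain, (y : E) = x ∧ f y = 0 :=
  f.mem_graph_iff

theorem coe_mem_ker {f : E →ₗ.[R] F} (x : f.domain) : (x : E) ∈ f.ker ↔ f x = 0 := by
  refine ⟨fun hx => ?_, fun hx => mem_ker.2 ⟨x, rfl, hx⟩⟩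
  obtain ⟨y, hyx, hy⟩ := mem_ker.1 hx
  rwa [← Subtype.ext hyx]

theorem ker_le_domain (f : E →ₗ.[R] F) : f.ker ≤ f.domain := fun _ hx => by
  obtain ⟨y, rfl, -⟩ := mem_ker.1 hx
  exact y.2

end Ker

theorem isClosed_ker {R E F : Type*} [CommRing R] [AddCommGroup E] [Module R E] [AddCommGroup F]
    [Module R F] [TopologicalSpace E] [TopologicalSpace F] {f : E →ₗ.[R] F} (hf : f.IsClosed) :
    _root_.IsClosed (f.ker : Set E) :=
  hf.preimage (continuous_id.prodMk continuous_const)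

section OpenMapping

variable {𝕜 E F : Type*} [NontriviallyNormedField 𝕜]
  [NormedAddCommGroup E] [NormedSpace 𝕜 E] [CompleteSpace E]
  [NormedAddCommGroup F] [NormedSpace 𝕜 F] [CompleteSpace F]

theorem exists_preimage_norm_le {f : E →ₗ.[𝕜] F} (hf : f.IsClosed)
    (hr : _root_.IsClosed (LinearMap.range f.toFun : Set F)) :
    ∃ c, 0 ≤ c ∧ ∀ y ∈ LinearMap.range f.toFun, ∃ x : f.domain, f x = y ∧ ‖(x : E)‖ ≤ c * ‖y‖ := by
  have : CompleteSpace f.graph := hf.completeSpace_coe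
  have : CompleteSpace (LinearMap.range f.toFun) := hr.completeSpace_coe
  have hsnd (g : f.graph) : (g : E × F).2 ∈ LinearMap.range f.toFun := by
    obtain ⟨x, -, hx⟩ := f.mem_graph_iff.1 g.2
    exact ⟨x, hx⟩
  let φ : f.graph →L[𝕜] LinearMap.range f.toFun :=
    ((ContinuousLinearMap.snd 𝕜 E F).comp f.graph.subtypeL).codRestrict _ hsnd
  have hφ : Function.Surjective φ := by
    rintro ⟨-, x, rfl⟩
    exact ⟨⟨(x, f x), f.mem_graph x⟩, rfl⟩
  obtain ⟨c, hc, hφc⟩ := φ.exists_preimage_norm_le hφ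
  refine ⟨c, hc.le, fun y hy => ?_⟩
  obtain ⟨g, hgy, hg⟩ := hφc ⟨y, hy⟩
  obtain ⟨x, hxg, hxy⟩ := f.mem_graph_iff.1 g.2
  refine ⟨x, hxy.trans (congrArg Subtype.val hgy), ?_⟩
  calc ‖(x : E)‖ = ‖(g : E × F).1‖ := by rw [hxg]
    _ ≤ ‖g‖ := norm_fst_le _
    _ ≤ c * ‖y‖ := hg

end OpenMapping

section InnerProduct

variable {𝕜 E F : Type*} [RCLike 𝕜]
  [NormedAddCommGroup E] [InnerProductSpace 𝕜 E] [CompleteSpace E]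
  [NormedAddCommGroup F] [InnerProductSpace 𝕜 F]

theorem exists_norm_sub_le_of_mem_ker [CompleteSpace F] {f : E →ₗ.[𝕜] F} (hf : f.IsClosed)
    (hr : _root_.IsClosed (LinearMap.range f.toFun : Set F)) :
    ∃ c, ∀ (x : f.domain) (k : E), k ∈ f.ker → (x : E) - k ∈ f.kerᗮ →
      ‖(x : E) - k‖ ≤ c * ‖f x‖ := by
  obtain ⟨c, -, hc⟩ := exists_preimage_norm_le hf hr
  refine ⟨c, fun x k hk hxk => ?_⟩
  obtain ⟨z, hzx, hz⟩ := hc (f x) ⟨x, rfl⟩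
  have hxz : ((x - z : f.domain) : E) ∈ f.ker := by
    rw [coe_mem_ker, f.map_sub, hzx, sub_self]
  calc ‖(x : E) - k‖ ≤ ‖(z : E)‖ :=
        Submodule.norm_le_of_mem_orthogonal_of_sub_mem hxk <| by
          convert f.ker.sub_mem hk hxz using 1
          push_cast; abel
    _ ≤ c * ‖f x‖ := hz

theorem orthogonal_range_le_ker_adjoint {f : E →ₗ.[𝕜] F} (hdense : Dense (f.domain : Set E)) :
    (LinearMap.range f.toFun)ᗮ ≤ (f†).ker := by
  intro y hy
  have hy' (x : f.domain) : ⟪(0 : E), (x : E)⟫_𝕜 = ⟪y, f x⟫_𝕜 := by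
    rw [inner_zero_left]
    exact ((Submodule.mem_orthogonal' _ _).1 hy _ ⟨x, rfl⟩).symm
  have hmem : y ∈ (f†).domain := mem_adjoint_domain_of_exists y ⟨0, hy'⟩
  exact mem_ker.2 ⟨⟨y, hmem⟩, rfl, adjoint_apply_eq hdense ⟨y, hmem⟩ hy'⟩

theorem exists_norm_le_adjoint_of_mem_range [CompleteSpace F] {f : E →ₗ.[𝕜] F}
    (hdense : Dense (f.domain : Set E)) (hf : f.IsClosed)
    (hr : _root_.IsClosed (LinearMap.range f.toFun : Set F)) :
    ∃ c, ∀ (y : (f†).domain) (r : F), r ∈ LinearMap.range f.toFun →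
      (y : F) - r ∈ (LinearMap.range f.toFun)ᗮ → ‖r‖ ≤ c * ‖f† y‖ := by
  obtain ⟨c, hc0, hc⟩ := exists_preimage_norm_le hf hr
  refine ⟨c, fun y r hr hyr => ?_⟩
  obtain ⟨a, rfl, ha⟩ := hc r hr
  have hya : ⟪(y : F) - f a, f a⟫_𝕜 = 0 := (Submodule.mem_orthogonal' _ _).1 hyr _ ⟨a, rfl⟩
  refine le_of_sq_le_mul (by positivity) ?_
  calc ‖f a‖ ^ 2 = RCLike.re ⟪(y : F), f a⟫_𝕜 := by
        rw [← sub_add_cancel (y : F) (f a), inner_add_left, hya, zero_add,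
          inner_self_eq_norm_sq]
    _ = RCLike.re ⟪f† y, (a : E)⟫_𝕜 := by rw [adjoint_isFormalAdjoint hdense y a]
    _ ≤ ‖f† y‖ * ‖(a : E)‖ := re_inner_le_norm _ _
    _ ≤ ‖f† y‖ * (c * ‖f a‖) := by gcongr
    _ = c * ‖f† y‖ * ‖f a‖ := by ring

theorem isClosed_range_of_norm_le [CompleteSpace F] {f : E →ₗ.[𝕜] F} (hf : f.IsClosed) {C : ℝ}
    (hC : ∀ x : f.domain, (x : E) ∈ f.kerᗮ → ‖(x : E)‖ ≤ C * ‖f x‖) :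
    _root_.IsClosed (LinearMap.range f.toFun : Set F) := by
  have : CompleteSpace f.ker := (isClosed_ker hf).completeSpace_coe
  -- `S` is the part of the graph lying over `(ker f)ᗮ`: its projection to `F` is bounded below
  -- and still has the range of `f` as image
  set S : Submodule 𝕜 (E × F) := f.graph ⊓ f.kerᗮ.prod ⊤
  have hS : _root_.IsClosed (S : Set (E × F)) := by
    refine hf.inter ?_
    rw [Submodule.prod_coe]
    exact f.ker.isClosed_orthogonal.prod isClosed_univ
  have : CompleteSpace S := hS.completeSpace_coe
  let φ : S →L[𝕜] F := (ContinuousLinearMap.snd 𝕜 E F).comp S.subtypeL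
  have hφ : AntilipschitzWith (max C 1).toNNReal φ := by
    refine φ.antilipschitz_of_bound fun s => ?_
    obtain ⟨x, hxs, hfx⟩ := f.mem_graph_iff.1 s.2.1
    have hx : (x : E) ∈ f.kerᗮ := hxs ▸ s.2.2.1
    have hφs : φ s = f x := hfx.symm
    rw [Real.coe_toNNReal _ ((zero_le_one).trans (le_max_right _ _)), hφs]
    show max ‖(s : E × F).1‖ ‖(s : E × F).2‖ ≤ _
    refine max_le ?_ ?_
    · calc ‖(s : E × F).1‖ = ‖(x : E)‖ := by rw [hxs]
        _ ≤ C * ‖f x‖ := hC x hx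
        _ ≤ max C 1 * ‖f x‖ := by gcongr; exact le_max_left _ _
    · rw [← hfx]
      exact le_mul_of_one_le_left (norm_nonneg _) (le_max_right _ _)
  have hrange : (LinearMap.range f.toFun : Set F) = Set.range φ := by
    refine Set.Subset.antisymm ?_ ?_
    · rintro _ ⟨x, rfl⟩
      obtain ⟨k, hk, hfk⟩ := mem_ker.1 (f.ker.starProjection_apply_mem (x : E))
      have hxk : ((x - k : f.domain) : E) ∈ f.kerᗮ := by
        rw [Submodule.coe_sub, hk]
        exact f.ker.sub_starProjection_mem_orthogonal _
      refine ⟨⟨(((x - k : f.domain) : E), f (x - k)), f.mem_graph _, hxk, trivial⟩, ?_⟩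
      change f (x - k) = f x
      rw [f.map_sub, hfk, sub_zero]
    · rintro _ ⟨s, rfl⟩
      obtain ⟨x, -, hfx⟩ := f.mem_graph_iff.1 s.2.1
      exact ⟨x, hfx⟩
  rw [hrange]
  exact hφ.isClosed_range φ.uniformContinuous

end InnerProduct

end LinearPMap

section HilbertComplex

open LinearPMap

variable {𝕜 H₀ H₁ H₂ : Type*} [RCLike 𝕜]
  [NormedAddCommGroup H₀] [InnerProductSpace 𝕜 H₀] [CompleteSpace H₀]
  [NormedAddCommGroup H₁] [InnerProductSpace 𝕜 H₁] [CompleteSpace H₁]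
  [NormedAddCommGroup H₂] [InnerProductSpace 𝕜 H₂]

def harmonicSpace (d0 : H₀ →ₗ.[𝕜] H₁) (d1 : H₁ →ₗ.[𝕜] H₂) : Submodule 𝕜 H₁ :=
  d1.ker ⊓ (LinearMap.range d0.toFun)ᗮ

structure IsHodgeLaplacian (d0 : H₀ →ₗ.[𝕜] H₁) (d1 : H₁ →ₗ.[𝕜] H₂) (B : H₁ →ₗ.[𝕜] H₁) :
    Prop where
  mem_domain_iff : ∀ u : H₁, u ∈ B.domain ↔
    ∃ (h1 : u ∈ d1.domain) (h2 : u ∈ (d0†).domain),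
      d1 ⟨u, h1⟩ ∈ (d1†).domain ∧ d0† ⟨u, h2⟩ ∈ d0.domain
  apply_eq : ∀ (u : B.domain) (h1 : (u : H₁) ∈ d1.domain) (h2 : (u : H₁) ∈ (d0†).domain)
    (h3 : d1 ⟨u, h1⟩ ∈ (d1†).domain) (h4 : d0† ⟨u, h2⟩ ∈ d0.domain),
    B u = d1† ⟨d1 ⟨u, h1⟩, h3⟩ + d0 ⟨d0† ⟨u, h2⟩, h4⟩

namespace IsHodgeLaplacian

variable {d0 : H₀ →ₗ.[𝕜] H₁} {d1 : H₁ →ₗ.[𝕜] H₂} {B : H₁ →ₗ.[𝕜] H₁}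

theorem re_inner_apply_self (hB : IsHodgeLaplacian d0 d1 B) (h0dense : Dense (d0.domain : Set H₀))
    (h1dense : Dense (d1.domain : Set H₁)) (u : B.domain) (h1 : (u : H₁) ∈ d1.domain)
    (h2 : (u : H₁) ∈ (d0†).domain) :
    RCLike.re ⟪B u, (u : H₁)⟫_𝕜 = ‖d1 ⟨u, h1⟩‖ ^ 2 + ‖d0† ⟨u, h2⟩‖ ^ 2 := by
  obtain ⟨_, _, h3, h4⟩ := (hB.mem_domain_iff u).1 u.2
  have e1 : ⟪d1† ⟨_, h3⟩, (u : H₁)⟫_𝕜 = ⟪d1 ⟨u, h1⟩, d1 ⟨u, h1⟩⟫_𝕜 :=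
    adjoint_isFormalAdjoint h1dense ⟨_, h3⟩ ⟨u, h1⟩
  have e0 : RCLike.re ⟪d0 ⟨_, h4⟩, (u : H₁)⟫_𝕜 = RCLike.re ⟪d0† ⟨u, h2⟩, d0† ⟨u, h2⟩⟫_𝕜 := by
    rw [inner_re_symm, ← adjoint_isFormalAdjoint h0dense ⟨u, h2⟩ ⟨_, h4⟩]
  rw [hB.apply_eq u h1 h2 h3 h4, inner_add_left, _root_.map_add, e1, e0,
    inner_self_eq_norm_sq, inner_self_eq_norm_sq]

theorem harmonicSpace_le_ker (hB : IsHodgeLaplacian d0 d1 B)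
    (h0dense : Dense (d0.domain : Set H₀)) : harmonicSpace d0 d1 ≤ B.ker := by
  rintro x ⟨hx1, hx0⟩
  replace hx0 := orthogonal_range_le_ker_adjoint h0dense hx0
  have h1 : x ∈ d1.domain := d1.ker_le_domain hx1
  have h2 : x ∈ (d0†).domain := (d0†).ker_le_domain hx0
  have hd1 : d1 ⟨x, h1⟩ = 0 := (coe_mem_ker ⟨x, h1⟩).1 hx1
  have hd0 : d0† ⟨x, h2⟩ = 0 := (coe_mem_ker ⟨x, h2⟩).1 hx0
  have h3 : d1 ⟨x, h1⟩ ∈ (d1†).domain := hd1 ▸ zero_mem _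
  have h4 : d0† ⟨x, h2⟩ ∈ d0.domain := hd0 ▸ zero_mem _
  have hxB : x ∈ B.domain := (hB.mem_domain_iff x).2 ⟨h1, h2, h3, h4⟩
  have z1 : (⟨d1 ⟨x, h1⟩, h3⟩ : (d1†).domain) = 0 := Subtype.ext hd1
  have z0 : (⟨d0† ⟨x, h2⟩, h4⟩ : d0.domain) = 0 := Subtype.ext hd0
  refine (coe_mem_ker ⟨x, hxB⟩).2 ?_
  rw [hB.apply_eq ⟨x, hxB⟩ h1 h2 h3 h4, z1, z0, LinearPMap.map_zero, LinearPMap.map_zero, add_zero]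

theorem exists_norm_sq_le_re_inner [CompleteSpace H₂] (hB : IsHodgeLaplacian d0 d1 B)
    (h0dense : Dense (d0.domain : Set H₀)) (h1dense : Dense (d1.domain : Set H₁))
    (h0closed : d0.IsClosed) (h1closed : d1.IsClosed)
    (hcomplex : LinearMap.range d0.toFun ≤ d1.ker)
    (hrange_d0 : IsClosed (LinearMap.range d0.toFun : Set H₁))
    (hrange_d1 : IsClosed (LinearMap.range d1.toFun : Set H₂)) :
    ∃ C, 0 ≤ C ∧ ∀ u : B.domain, (u : H₁) ∈ (harmonicSpace d0 d1)ᗮ →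
      ‖(u : H₁)‖ ^ 2 ≤ C * RCLike.re ⟪B u, (u : H₁)⟫_𝕜 := by
  obtain ⟨c0, hc0⟩ := exists_norm_le_adjoint_of_mem_range h0dense h0closed hrange_d0
  obtain ⟨c1, hc1⟩ := exists_norm_sub_le_of_mem_ker h1closed hrange_d1
  have : CompleteSpace d1.ker := (isClosed_ker h1closed).completeSpace_coe
  have : CompleteSpace (LinearMap.range d0.toFun) := hrange_d0.completeSpace_coe
  refine ⟨c0 ^ 2 + c1 ^ 2, by positivity, fun u hu => ?_⟩
  obtain ⟨h1, h2, -⟩ := (hB.mem_domain_iff u).1 u.2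
  -- `u ⊥ ker d1 ⊓ (range d0)ᗮ` forces the `ker d1`-component of `u` into `range d0`
  set p := d1.ker.starProjection u
  have hp : p ∈ LinearMap.range d0.toFun :=
    Submodule.starProjection_mem_of_mem_orthogonal_inf hcomplex hu
  have hq : (u : H₁) - p ∈ d1.kerᗮ := d1.ker.sub_starProjection_mem_orthogonal _
  have hp_le : ‖p‖ ≤ c0 * ‖d0† ⟨u, h2⟩‖ :=
    hc0 ⟨u, h2⟩ p hp (Submodule.orthogonal_le hcomplex hq)
  have hq_le : ‖(u : H₁) - p‖ ≤ c1 * ‖d1 ⟨u, h1⟩‖ :=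
    hc1 ⟨u, h1⟩ p (d1.ker.starProjection_apply_mem _) hq
  rw [hB.re_inner_apply_self h0dense h1dense u h1 h2,
    d1.ker.norm_sq_eq_add_norm_sq_starProjection, Submodule.starProjection_orthogonal_val]
  nlinarith [pow_le_pow_left₀ (norm_nonneg _) hp_le 2, pow_le_pow_left₀ (norm_nonneg _) hq_le 2]

end IsHodgeLaplacian

end HilbertComplex

/-- Conversely, if `∂₀ : H₀ → H₁` and `∂₁ : H₁ → H₂` both have closed range, then the
Laplacian `□ = ∂∂* + ∂*∂` on `H₁` has closed range, with the estimate
`‖u‖² ≤ C ⟨□u, u⟩` for all `u ∈ dom □` orthogonal to `ker □`. -/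
theorem laplacian_closed_range_of_closed_ranges
    {H₀ H₁ H₂ : Type*}
    [NormedAddCommGroup H₀] [InnerProductSpace ℂ H₀] [CompleteSpace H₀]
    [NormedAddCommGroup H₁] [InnerProductSpace ℂ H₁] [CompleteSpace H₁]
    [NormedAddCommGroup H₂] [InnerProductSpace ℂ H₂] [CompleteSpace H₂]
    (d0 : H₀ →ₗ.[ℂ] H₁) (d1 : H₁ →ₗ.[ℂ] H₂)
    (h0dense : Dense (d0.domain : Set H₀)) (h1dense : Dense (d1.domain : Set H₁))
    (h0closed : d0.IsClosed) (h1closed : d1.IsClosed)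
    (hcomplex : ∀ x : d0.domain, ∃ h : d0 x ∈ d1.domain, d1 ⟨d0 x, h⟩ = 0)
    (B : H₁ →ₗ.[ℂ] H₁)
    (hBdom : ∀ u : H₁, u ∈ B.domain ↔
      ∃ (h1 : u ∈ d1.domain) (h2 : u ∈ (d0†).domain),
        d1 ⟨u, h1⟩ ∈ (d1†).domain ∧ d0† ⟨u, h2⟩ ∈ d0.domain)
    (hBval : ∀ (u : B.domain) (h1 : (u : H₁) ∈ d1.domain)
      (h2 : (u : H₁) ∈ (d0†).domain)
      (h3 : d1 ⟨(u : H₁), h1⟩ ∈ (d1†).domain)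
      (h4 : d0† ⟨(u : H₁), h2⟩ ∈ d0.domain),
      B u = d1† ⟨d1 ⟨(u : H₁), h1⟩, h3⟩ + d0 ⟨d0† ⟨(u : H₁), h2⟩, h4⟩)
    (hBsa : B† = B)
    (hrange_d0 : IsClosed ((LinearMap.range d0.toFun : Submodule ℂ H₁) : Set H₁))
    (hrange_d1 : IsClosed ((LinearMap.range d1.toFun : Submodule ℂ H₂) : Set H₂)) :
    IsClosed ((LinearMap.range B.toFun : Submodule ℂ H₁) : Set H₁) ∧
    ∃ C : ℝ, ∀ u : B.domain,
      (∀ v : B.domain, B v = 0 → ⟪(u : H₁), (v : H₁)⟫ = 0) →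
      ‖(u : H₁)‖ ^ 2 ≤ C * (⟪B u, (u : H₁)⟫).re := by
  have hB : IsHodgeLaplacian d0 d1 B := ⟨hBdom, hBval⟩
  have hd1d0 : LinearMap.range d0.toFun ≤ d1.ker := by
    rintro _ ⟨x, rfl⟩
    obtain ⟨h, hx⟩ := hcomplex x
    exact LinearPMap.mem_ker.2 ⟨⟨_, h⟩, rfl, hx⟩
  obtain ⟨C, hC0, hC⟩ := hB.exists_norm_sq_le_re_inner h0dense h1dense h0closed h1closed hd1d0
    hrange_d0 hrange_d1
  have hker (u : B.domain) (hu : (u : H₁) ∈ B.kerᗮ) :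
      ‖(u : H₁)‖ ^ 2 ≤ C * (⟪B u, (u : H₁)⟫).re :=
    hC u (Submodule.orthogonal_le (hB.harmonicSpace_le_ker h0dense) hu)
  refine ⟨LinearPMap.isClosed_range_of_norm_le (IsSelfAdjoint.isClosed hBsa) fun u hu =>
    le_of_sq_le_mul (by positivity) ((hker u hu).trans ?_), C, fun u hu => hker u ?_⟩
  · rw [mul_assoc]
    exact mul_le_mul_of_nonneg_left (re_inner_le_norm (𝕜 := ℂ) (B u) (u : H₁)) hC0
  · refine (Submodule.mem_orthogonal' _ _).2 fun v hv => ?_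
    obtain ⟨w, rfl, hw⟩ := LinearPMap.mem_ker.1 hv
    exact hu w hw
end
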